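/- arXiv:1212.3369 — 2 statements merged into one kernel-verified Lean document; each statement's English description precedes it below -/
import Mathlib

section
/- Let m, v ∈ ℝ³ with |m| = 1 and m · v = 0, and let k > 0. Define m' = (m + k v)/|m + k v|. Then |(m' − m)/k| ≤ |v|. -/
open RealInnerProductSpace

theorem stmt3 (m v : EuclideanSpace ℝ (Fin 3)) (hm : ‖m‖ = 1)
    (hmv : ⟪m, v⟫ = 0) (k : ℝ) (hk : 0 < k)
    (m' : EuclideanSpace ℝ (Fin 3)) (hm' : m' = ‖m + k • v‖⁻¹ • (m + k • v)) :
    ‖(1 / k) • (m' - m)‖ ≤ ‖v‖ := by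
  set w : EuclideanSpace ℝ (Fin 3) := m + k • v with hw
  have hinner : ⟪m, k • v⟫ = 0 := by
    rw [real_inner_smul_right, hmv]; ring
  have hinner2 : ⟪k • v, m⟫ = 0 := by
    rw [real_inner_smul_left, real_inner_comm, hmv]; ring
  have hw2 : ‖w‖ ^ 2 = 1 + k ^ 2 * ‖v‖ ^ 2 := by
    rw [hw, ← real_inner_self_eq_norm_sq, inner_add_add_self,
      real_inner_self_eq_norm_sq, real_inner_self_eq_norm_sq, hinner, hinner2,
      hm, norm_smul]
    simp [abs_of_pos hk]
    ring
  have hwge : (1:ℝ) ≤ ‖w‖ := by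
    nlinarith [norm_nonneg w, sq_nonneg (k * ‖v‖)]
  have hwpos : (0:ℝ) < ‖w‖ := lt_of_lt_of_le one_pos hwge
  have hwne : w ≠ 0 := by
    intro h; rw [h, norm_zero] at hwpos; exact lt_irrefl 0 hwpos
  have hm'norm : ‖m'‖ = 1 := by
    rw [hm', norm_smul]
    simp [abs_of_pos (inv_pos.mpr hwpos)]
    field_simp
  have hwm : ⟪w, m⟫ = 1 := by
    rw [hw, inner_add_left, real_inner_self_eq_norm_sq, hm, hinner2]
    norm_num
  have hm'm : ⟪m', m⟫ = ‖w‖⁻¹ := by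
    rw [hm', real_inner_smul_left, hwm, mul_one]
  have hdiff : ‖m' - m‖ ^ 2 = 2 - 2 * ‖w‖⁻¹ := by
    rw [← real_inner_self_eq_norm_sq, inner_sub_sub_self,
      real_inner_self_eq_norm_sq, real_inner_self_eq_norm_sq, hm'norm, hm]
    have hmm' : ⟪m, m'⟫ = ‖w‖⁻¹ := (real_inner_comm m' m).trans hm'm
    simp only [hm'm, hmm']
    ring
  have key : ‖m' - m‖ ^ 2 ≤ (k * ‖v‖) ^ 2 := by
    rw [hdiff]
    have h1 : (k * ‖v‖) ^ 2 = ‖w‖ ^ 2 - 1 := by rw [hw2]; ring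
    rw [h1]
    have hc : ‖w‖⁻¹ * ‖w‖ = 1 := inv_mul_cancel₀ (ne_of_gt hwpos)
    have h3 : (0:ℝ) ≤ (‖w‖ - 1) ^ 2 * (‖w‖ + 2) := by positivity
    nlinarith [hc, h3, hwpos]
  have hle : ‖m' - m‖ ≤ k * ‖v‖ := by
    nlinarith [key, norm_nonneg (m' - m), mul_nonneg hk.le (norm_nonneg v)]
  rw [norm_smul, Real.norm_eq_abs, abs_of_pos (by positivity : (0:ℝ) < 1/k),
    div_mul_eq_mul_div, one_mul, div_le_iff₀ hk]
  linarith [hle]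
end

section
/- Let m, v ∈ ℝ³ with |m| = 1 and m · v = 0, and let k > 0. Define m' = (m + k v)/|m + k v|. Then |(m' − m)/k − v| ≤ (k/2)|v|². -/
open RealInnerProductSpace

theorem stmt6 (m v : EuclideanSpace ℝ (Fin 3)) (hm : ‖m‖ = 1)
    (hmv : ⟪m, v⟫ = 0) (k : ℝ) (hk : 0 < k)
    (m' : EuclideanSpace ℝ (Fin 3)) (hm' : m' = ‖m + k • v‖⁻¹ • (m + k • v)) :
    ‖(1 / k) • (m' - m) - v‖ ≤ k / 2 * ‖v‖ ^ 2 := by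
  set N : ℝ := ‖m + k • v‖ with hN
  have hN2 : N ^ 2 = 1 + k ^ 2 * ‖v‖ ^ 2 := by
    rw [hN, norm_add_sq_real, hm, real_inner_smul_right, hmv, norm_smul]
    simp [abs_of_pos hk, mul_pow]
  have hN1 : (1 : ℝ) ≤ N := by
    nlinarith [norm_nonneg (m + k • v), sq_nonneg ‖v‖, sq_nonneg k]
  have hNpos : (0 : ℝ) < N := lt_of_lt_of_le one_pos hN1
  have key : (1 / k) • (m' - m) - v = ((N⁻¹ - 1) / k) • (m + k • v) := by
    rw [hm']
    match_scalars <;> field_simp <;> (try ring) <;> tauto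
  rw [key, norm_smul, ← hN]
  have habs : ‖(N⁻¹ - 1) / k‖ * N = (N - 1) / k := by
    rw [Real.norm_eq_abs, abs_div, abs_of_pos hk,
      abs_of_nonpos (by simp only [sub_nonpos]; exact inv_le_one_of_one_le₀ hN1)]
    field_simp
    ring
  rw [habs, div_le_iff₀ hk]
  nlinarith [sq_nonneg ‖v‖]
end
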